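/- arXiv:1711.01542 — 2 statements merged into one kernel-verified Lean document; each statement's English description precedes it below -/
import Mathlib

section
/- (Theorem 4, part ii) Let B > 0 and c ≥ 0. Then lim_{m→∞} ∫₀^∞ exp(−m·c/t) · B^m t^{m−1} e^{−Bt}/Γ(m) dt = exp(−c·B). That is, if Tₘ ~ Gamma(shape m, rate B), then E[exp(−m·c/Tₘ)] → exp(−c·B) as m → ∞; hence the MLE F̂ of the CDF F(x;θ) = exp(−B(θ)A(x)) based on m lower record values, F̂ = exp(−m·A(x)/A(R′ₘ)), is asymptotically unbiased. -/
/-! Since `x ↦ exp (-x)` is 1-Lipschitz on `[0, ∞)`, for `T ~ Gamma(a, r)` we get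
`|E exp (-a c / T) - exp (-c r)| ≤ c r E[|T - a/r| / T]`. The pointwise AM-GM bound
`|x| ≤ (k x² + k⁻¹) / 2` with `k = r / √a` reduces the right side to the moments
`E[(T - a/r)² / T] = a / (r (a - 1))` and `E[1/T] = r / (a - 1)`, both read off the Gamma integral,
and yields the bound `c r √a / (a - 1) → 0`. -/

open MeasureTheory Filter Set Real ProbabilityTheory Topology

lemma abs_exp_neg_sub_exp_neg_le {x y : ℝ} (hx : 0 ≤ x) (hy : 0 ≤ y) :
    |exp (-x) - exp (-y)| ≤ |x - y| := by
  wlog hxy : y ≤ x generalizing x y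
  · rw [abs_sub_comm, abs_sub_comm x]
    exact this hy hx (le_of_not_ge hxy)
  have hdiff : exp (-y) - exp (-x) ≤ x - y := calc
    exp (-y) - exp (-x) = exp (-y) * (1 - exp (-(x - y))) := by
      rw [mul_sub, ← exp_add]; ring_nf
    _ ≤ 1 - exp (-(x - y)) :=
      mul_le_of_le_one_left (sub_nonneg.2 (exp_le_one_iff.2 (by linarith)))
        (exp_le_one_iff.2 (by linarith))
    _ ≤ x - y := by linarith [one_sub_le_exp_neg (x - y)]
  rw [abs_of_nonpos (sub_nonpos.2 (exp_le_exp.2 (neg_le_neg hxy))), abs_of_nonneg (by linarith)]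
  linarith

lemma abs_le_half_mul_sq_add_inv {k : ℝ} (hk : 0 < k) (x : ℝ) :
    |x| ≤ (k * x ^ 2 + k⁻¹) / 2 := by
  have h : 0 ≤ (k * |x| - 1) ^ 2 / k := by positivity
  have : (k * |x| - 1) ^ 2 / k = k * x ^ 2 + k⁻¹ - 2 * |x| := by
    field_simp; rw [← sq_abs x]; ring
  linarith

lemma abs_exp_neg_div_sub_exp_neg_le {a r c k t : ℝ} (ha : 0 ≤ a) (hr : 0 < r) (hc : 0 ≤ c)
    (hk : 0 < k) (ht : 0 < t) :
    |exp (-(a * c / t)) - exp (-(c * r))|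
      ≤ c * r / 2 * (k * ((t - a / r) ^ 2 / t) + k⁻¹ * t⁻¹) := calc
  _ ≤ |a * c / t - c * r| := abs_exp_neg_sub_exp_neg_le (by positivity) (by positivity)
  _ = c * r * (|t - a / r| / t) := by
    rw [show a * c / t - c * r = c * r * ((a / r - t) / t) by field_simp, abs_mul, abs_div,
      abs_of_nonneg (by positivity : 0 ≤ c * r), abs_of_pos ht, abs_sub_comm]
  _ ≤ c * r * ((k * (t - a / r) ^ 2 + k⁻¹) / 2 / t) := by
    gcongr
    exact abs_le_half_mul_sq_add_inv hk _
  _ = c * r / 2 * (k * ((t - a / r) ^ 2 / t) + k⁻¹ * t⁻¹) := by ring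

lemma sq_sub_div_mul_eq {t : ℝ} (ht : t ≠ 0) (μ ρ : ℝ) :
    (t - μ) ^ 2 / t * ρ = t * ρ - 2 * μ * ρ + μ ^ 2 * (t⁻¹ * ρ) := by
  field_simp
  ring

lemma gammaPDFReal_natCast {n : ℕ} (hn : 1 ≤ n) (r : ℝ) {t : ℝ} (ht : 0 ≤ t) :
    gammaPDFReal n r t = r ^ n * t ^ (n - 1) * exp (-(r * t)) / Gamma n := by
  rw [gammaPDFReal, if_pos ht, ← Nat.cast_one, ← Nat.cast_sub hn, rpow_natCast, rpow_natCast]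
  ring

section GammaMoments

variable {a r k : ℝ}

lemma integrableOn_rpow_mul_gammaPDFReal (hr : 0 < r) (hak : 0 < a + k) :
    IntegrableOn (fun t => t ^ k * gammaPDFReal a r t) (Ioi 0) := by
  have := (integrableOn_rpow_mul_exp_neg_mul_rpow (p := 1) (s := a + k - 1) (by linarith)
    one_pos hr).const_mul (r ^ a / Gamma a)
  refine IntegrableOn.congr_fun this (fun t (ht : 0 < t) => ?_) measurableSet_Ioi
  rw [gammaPDFReal, if_pos ht.le, rpow_one, show a + k - 1 = k + (a - 1) by ring,
    rpow_add ht]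
  ring_nf

lemma integral_rpow_mul_gammaPDFReal (hr : 0 < r) (hak : 0 < a + k) :
    ∫ t in Ioi 0, t ^ k * gammaPDFReal a r t = Gamma (a + k) / (Gamma a * r ^ k) := by
  have hpdf : ∀ t ∈ Ioi (0 : ℝ), t ^ k * gammaPDFReal a r t
      = r ^ a / Gamma a * (t ^ (a + k - 1) * exp (-(r * t))) := fun t (ht : 0 < t) => by
    rw [gammaPDFReal, if_pos ht.le, show a + k - 1 = k + (a - 1) by ring, rpow_add ht]
    ring
  rw [setIntegral_congr_fun measurableSet_Ioi hpdf, integral_const_mul,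
    integral_rpow_mul_exp_neg_mul_Ioi hak hr, one_div, inv_rpow hr.le, rpow_add hr]
  field_simp

lemma integral_gammaPDFReal_Ioi (ha : 0 < a) (hr : 0 < r) :
    ∫ t in Ioi 0, gammaPDFReal a r t = 1 := by
  simpa [(Gamma_pos_of_pos ha).ne'] using
    integral_rpow_mul_gammaPDFReal (a := a) (k := 0) hr (by simpa)

lemma integral_mul_gammaPDFReal (ha : 0 < a) (hr : 0 < r) :
    ∫ t in Ioi 0, t * gammaPDFReal a r t = a / r := by
  have := integral_rpow_mul_gammaPDFReal (a := a) (k := 1) hr (by linarith)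
  simp only [rpow_one] at this
  rw [this, Gamma_add_one ha.ne']
  field_simp [(Gamma_pos_of_pos ha).ne']

lemma integral_inv_mul_gammaPDFReal (ha : 1 < a) (hr : 0 < r) :
    ∫ t in Ioi 0, t⁻¹ * gammaPDFReal a r t = r / (a - 1) := by
  have := integral_rpow_mul_gammaPDFReal (a := a) (k := -1) hr (by linarith)
  have hΓ : Gamma a = (a - 1) * Gamma (a - 1) := by
    rw [← Gamma_add_one (by linarith), sub_add_cancel]
  simp only [rpow_neg_one, ← sub_eq_add_neg] at this
  rw [this, hΓ]
  field_simp [(Gamma_pos_of_pos (sub_pos.2 ha)).ne']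

lemma integrableOn_inv_mul_gammaPDFReal (ha : 1 < a) (hr : 0 < r) :
    IntegrableOn (fun t => t⁻¹ * gammaPDFReal a r t) (Ioi 0) := by
  simpa only [rpow_neg_one] using
    integrableOn_rpow_mul_gammaPDFReal (a := a) (k := -1) hr (by linarith)

lemma integrableOn_sq_sub_div_mul_gammaPDFReal (ha : 1 < a) (hr : 0 < r) (μ : ℝ) :
    IntegrableOn (fun t => (t - μ) ^ 2 / t * gammaPDFReal a r t) (Ioi 0) := by
  have h1 := integrableOn_rpow_mul_gammaPDFReal (a := a) (k := 1) hr (by linarith)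
  have h0 := integrableOn_rpow_mul_gammaPDFReal (a := a) (k := 0) hr (by linarith)
  simp only [rpow_one, rpow_zero, one_mul] at h1 h0
  refine IntegrableOn.congr_fun ((h1.sub (h0.const_mul (2 * μ))).add
    ((integrableOn_inv_mul_gammaPDFReal ha hr).const_mul (μ ^ 2)))
    (fun t (ht : 0 < t) => (sq_sub_div_mul_eq ht.ne' _ _).symm) measurableSet_Ioi

lemma integral_sq_sub_div_mul_gammaPDFReal (ha : 1 < a) (hr : 0 < r) :
    ∫ t in Ioi 0, (t - a / r) ^ 2 / t * gammaPDFReal a r t = a / (r * (a - 1)) := by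
  have h1 := integrableOn_rpow_mul_gammaPDFReal (a := a) (k := 1) hr (by linarith)
  have h0 := integrableOn_rpow_mul_gammaPDFReal (a := a) (k := 0) hr (by linarith)
  simp only [rpow_one, rpow_zero, one_mul] at h1 h0
  have h10 : IntegrableOn (fun t => t * gammaPDFReal a r t - 2 * (a / r) * gammaPDFReal a r t)
      (Ioi 0) := h1.sub (h0.const_mul _)
  rw [setIntegral_congr_fun measurableSet_Ioi fun t (ht : 0 < t) => sq_sub_div_mul_eq ht.ne' _ _,
    integral_add h10 ((integrableOn_inv_mul_gammaPDFReal ha hr).const_mul _),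
    integral_sub h1 (h0.const_mul _), integral_const_mul, integral_const_mul,
    integral_mul_gammaPDFReal (by linarith) hr, integral_gammaPDFReal_Ioi (by linarith) hr,
    integral_inv_mul_gammaPDFReal ha hr]
  field_simp [(sub_pos.2 ha).ne']
  ring

end GammaMoments

lemma abs_integral_exp_neg_div_mul_gammaPDFReal_sub_le {a r c : ℝ} (ha : 1 < a) (hr : 0 < r)
    (hc : 0 ≤ c) :
    |(∫ t in Ioi 0, exp (-(a * c / t)) * gammaPDFReal a r t) - exp (-(c * r))|
      ≤ c * r * √a / (a - 1) := by
  set ρ := gammaPDFReal a r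
  set k := r / √a
  have hk : 0 < k := by positivity
  have hρ : ∀ t, 0 ≤ ρ t := gammaPDFReal_nonneg (by linarith) hr
  have hρint : IntegrableOn ρ (Ioi 0) := by
    simpa using integrableOn_rpow_mul_gammaPDFReal (a := a) (k := 0) hr (by linarith)
  have hgρint : IntegrableOn (fun t => exp (-(a * c / t)) * ρ t) (Ioi 0) := by
    refine hρint.bdd_mul (c := 1) (by fun_prop) ?_
    filter_upwards [ae_restrict_mem measurableSet_Ioi] with t (ht : 0 < t)
    rw [norm_of_nonneg (exp_pos _).le, exp_le_one_iff, neg_nonpos]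
    positivity
  have hmajorant : IntegrableOn (fun t => c * r / 2 *
      (k * ((t - a / r) ^ 2 / t * ρ t) + k⁻¹ * (t⁻¹ * ρ t))) (Ioi 0) :=
    (((integrableOn_sq_sub_div_mul_gammaPDFReal ha hr _).const_mul k).add
      ((integrableOn_inv_mul_gammaPDFReal ha hr).const_mul k⁻¹)).const_mul _
  calc |(∫ t in Ioi 0, exp (-(a * c / t)) * ρ t) - exp (-(c * r))|
      = |∫ t in Ioi 0, (exp (-(a * c / t)) - exp (-(c * r))) * ρ t| := by
        simp_rw [sub_mul]
        rw [integral_sub hgρint (hρint.const_mul _), integral_const_mul,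
          integral_gammaPDFReal_Ioi (by linarith) hr, mul_one]
    _ ≤ ∫ t in Ioi 0, |(exp (-(a * c / t)) - exp (-(c * r))) * ρ t| :=
        abs_integral_le_integral_abs
    _ ≤ ∫ t in Ioi 0,
          c * r / 2 * (k * ((t - a / r) ^ 2 / t * ρ t) + k⁻¹ * (t⁻¹ * ρ t)) := by
        refine integral_mono_of_nonneg (Eventually.of_forall fun t => abs_nonneg _) hmajorant ?_
        filter_upwards [ae_restrict_mem measurableSet_Ioi] with t (ht : 0 < t)
        rw [abs_mul, abs_of_nonneg (hρ t)]
        calc _ ≤ c * r / 2 * (k * ((t - a / r) ^ 2 / t) + k⁻¹ * t⁻¹) * ρ t :=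
              mul_le_mul_of_nonneg_right
                (abs_exp_neg_div_sub_exp_neg_le (by linarith) hr hc hk ht) (hρ t)
          _ = _ := by ring
    _ = c * r / 2 * (k * (a / (r * (a - 1))) + k⁻¹ * (r / (a - 1))) := by
        rw [integral_const_mul, integral_add
          ((integrableOn_sq_sub_div_mul_gammaPDFReal ha hr _).const_mul k)
          ((integrableOn_inv_mul_gammaPDFReal ha hr).const_mul k⁻¹),
          integral_const_mul, integral_const_mul, integral_sq_sub_div_mul_gammaPDFReal ha hr,
          integral_inv_mul_gammaPDFReal ha hr]
    _ = c * r * √a / (a - 1) := by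
        have hsqrt : √a ^ 2 = a := sq_sqrt (by linarith)
        simp only [k]
        field_simp [(sub_pos.2 ha).ne']
        rw [hsqrt]
        ring

lemma tendsto_sqrt_div_sub_one_atTop : Tendsto (fun x : ℝ => √x / (x - 1)) atTop (𝓝 0) := by
  have hinv : Tendsto (fun x : ℝ => 2 * (√x)⁻¹) atTop (𝓝 0) := by
    simpa using (tendsto_inv_atTop_zero.comp tendsto_sqrt_atTop).const_mul 2
  refine squeeze_zero' ?_ ?_ hinv
  · filter_upwards [eventually_ge_atTop 2] with x hx
    exact div_nonneg (sqrt_nonneg x) (by linarith)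
  · filter_upwards [eventually_ge_atTop 2] with x hx
    have hsqrt : √x * √x = x := mul_self_sqrt (by linarith)
    have : 0 < √x := sqrt_pos.2 (by linarith)
    rw [div_le_iff₀ (by linarith), ← div_eq_mul_inv, div_mul_eq_mul_div, le_div_iff₀ this]
    nlinarith

theorem tendsto_integral_exp_neg_div_mul_gammaPDFReal {r c : ℝ} (hr : 0 < r) (hc : 0 ≤ c) :
    Tendsto (fun a : ℝ => ∫ t in Ioi 0, exp (-(a * c / t)) * gammaPDFReal a r t) atTop
      (𝓝 (exp (-(c * r)))) := by
  rw [tendsto_iff_norm_sub_tendsto_zero]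
  have hbound : Tendsto (fun a : ℝ => c * r * (√a / (a - 1))) atTop (𝓝 0) := by
    simpa using tendsto_sqrt_div_sub_one_atTop.const_mul (c * r)
  refine squeeze_zero' (Eventually.of_forall fun _ => norm_nonneg _) ?_ hbound
  filter_upwards [eventually_gt_atTop 1] with a ha
  rw [Real.norm_eq_abs, ← mul_div_assoc]
  exact abs_integral_exp_neg_div_mul_gammaPDFReal_sub_le ha hr hc

/-- Theorem 4, part ii: if `Tₘ ~ Gamma(shape m, rate B)` then
`E[exp(-m c / Tₘ)] → exp(-c B)` as `m → ∞`; the MLE of the CDF based on `m` lower record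
values is asymptotically unbiased. -/
theorem cdf_mle_asymptotically_unbiased (B c : ℝ) (hB : 0 < B) (hc : 0 ≤ c) :
    Tendsto (fun m : ℕ =>
        ∫ t in Set.Ioi (0 : ℝ), Real.exp (-((m : ℝ) * c / t)) *
          (B ^ m * t ^ (m - 1) * Real.exp (-(B * t)) / Real.Gamma (m : ℝ)))
      atTop (nhds (Real.exp (-(c * B)))) := by
  refine ((tendsto_integral_exp_neg_div_mul_gammaPDFReal hB hc).comp
    tendsto_natCast_atTop_atTop).congr' ?_
  filter_upwards [eventually_ge_atTop 1] with m hm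
  refine setIntegral_congr_fun measurableSet_Ioi fun t (ht : 0 < t) => ?_
  simp only [gammaPDFReal_natCast hm B ht.le]
end

section
/- Let B > 0 and c ≥ 0. Then lim_{m→∞} ∫₀^∞ (m/t)² · exp(−2m·c/t) · B^m t^{m−1} e^{−Bt}/Γ(m) dt = B² · exp(−2c·B). That is, if Tₘ ~ Gamma(shape m, rate B), then the second moment of (m/Tₘ)·exp(−m·c/Tₘ) converges to (B·exp(−c·B))², so the variance of the density estimator f̂_{MLE} based on m lower record values tends to 0 as m → ∞. -/
/-!
For `T ~ Gamma(m, B)` the factor `(m / T)²` is absorbed into the density by lowering the shape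
twice: `E[(m / T)² g(T)] = m² B² / ((m - 1)(m - 2)) · E[g(T')]` with `T' ~ Gamma(m - 2, B)`.
Here `g(T') = exp(-2c / (T' / m))` is bounded by `1`, and `T' / m → 1 / B` in `L²`, so by a
Chebyshev argument `E[g(T')] → exp(-2cB)`, while the prefactor tends to `B²`.
-/

open MeasureTheory Filter Set Real ProbabilityTheory Topology

theorem tendsto_integral_comp_of_tendsto_integral_sub_sq {ι Ω : Type*} [MeasurableSpace Ω]
    {l : Filter ι} {μ : ι → Measure Ω} [∀ i, IsProbabilityMeasure (μ i)] {X : ι → Ω → ℝ}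
    {a : ℝ} (hint : ∀ i, Integrable (fun ω => (X i ω - a) ^ 2) (μ i))
    (hL2 : Tendsto (fun i => ∫ ω, (X i ω - a) ^ 2 ∂μ i) l (𝓝 0)) {ψ : ℝ → ℝ} {M : ℝ}
    (hmeas : ∀ i, AEStronglyMeasurable (fun ω => ψ (X i ω)) (μ i))
    (hbound : ∀ i, ∀ᵐ ω ∂μ i, |ψ (X i ω)| ≤ M) (hψ : ContinuousAt ψ a) :
    Tendsto (fun i => ∫ ω, ψ (X i ω) ∂μ i) l (𝓝 (ψ a)) := by
  rw [Metric.tendsto_nhds]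
  intro ε hε
  obtain ⟨δ, hδ, hnear⟩ := Metric.continuousAt_iff.1 hψ (ε / 2) (half_pos hε)
  set K := |M| + |ψ a|
  -- Chebyshev: away from `a`, the oscillation `K` of `ψ` is dominated by `K (y - a)² / δ²`.
  have hpointwise : ∀ y, |ψ y| ≤ M → |ψ y - ψ a| ≤ ε / 2 + K / δ ^ 2 * (y - a) ^ 2 := by
    intro y hy
    have hK : |ψ y - ψ a| ≤ K := (abs_sub _ _).trans (by linarith [le_abs_self M])
    rcases lt_or_ge |y - a| δ with hya | hya
    · have hclose : |ψ y - ψ a| < ε / 2 := by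
        simpa only [Real.dist_eq] using hnear (by rwa [Real.dist_eq])
      linarith [show 0 ≤ K / δ ^ 2 * (y - a) ^ 2 by positivity]
    · have : δ ^ 2 ≤ (y - a) ^ 2 := by rw [← sq_abs (y - a)]; gcongr
      calc |ψ y - ψ a| ≤ K := hK
        _ ≤ K / δ ^ 2 * (y - a) ^ 2 := by
          rw [div_mul_eq_mul_div, le_div_iff₀ (by positivity)]; gcongr
        _ ≤ ε / 2 + K / δ ^ 2 * (y - a) ^ 2 := by linarith
  have hsmall : Tendsto (fun i => ε / 2 + K / δ ^ 2 * ∫ ω, (X i ω - a) ^ 2 ∂μ i) l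
      (𝓝 (ε / 2)) := by
    simpa using tendsto_const_nhds.add (hL2.const_mul (K / δ ^ 2))
  filter_upwards [hsmall.eventually_lt_const (half_lt_self hε)] with i hi
  have hψX : Integrable (fun ω => ψ (X i ω)) (μ i) :=
    .of_bound (hmeas i) M (by simpa only [Real.norm_eq_abs] using hbound i)
  calc dist (∫ ω, ψ (X i ω) ∂μ i) (ψ a)
      = |∫ ω, (ψ (X i ω) - ψ a) ∂μ i| := by
        rw [Real.dist_eq, integral_sub hψX (integrable_const _)]; simp
    _ ≤ ∫ ω, (ε / 2 + K / δ ^ 2 * (X i ω - a) ^ 2) ∂μ i := by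
        refine abs_integral_le_integral_abs.trans (integral_mono_ae ?_ ?_ ?_)
        · exact (hψX.sub (integrable_const _)).abs
        · exact (integrable_const _).add ((hint i).const_mul _)
        · filter_upwards [hbound i] with ω hω using hpointwise _ hω
    _ = ε / 2 + K / δ ^ 2 * ∫ ω, (X i ω - a) ^ 2 ∂μ i := by
        rw [integral_add (integrable_const _) ((hint i).const_mul _), integral_const_mul]; simp
    _ < ε := hi

namespace ProbabilityTheory

variable {a r : ℝ}

lemma measurable_gammaPDF (a r : ℝ) : Measurable (gammaPDF a r) :=
  (measurable_gammaPDFReal a r).ennreal_ofReal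

lemma integral_gammaMeasure (ha : 0 < a) (hr : 0 < r) (f : ℝ → ℝ) :
    ∫ x, f x ∂gammaMeasure a r = ∫ x in Ioi 0, gammaPDFReal a r x * f x := by
  rw [gammaMeasure, integral_withDensity_eq_integral_toReal_smul (measurable_gammaPDF a r)
    (ae_of_all _ fun _ => ENNReal.ofReal_lt_top), ← integral_Ici_eq_integral_Ioi,
    setIntegral_eq_integral_of_forall_compl_eq_zero fun x hx => ?_]
  · simp only [gammaPDF, ENNReal.toReal_ofReal (gammaPDFReal_nonneg ha hr _), smul_eq_mul]
  · simp [gammaPDFReal, show ¬ 0 ≤ x from hx]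

lemma ae_nonneg_gammaMeasure : ∀ᵐ x ∂gammaMeasure a r, 0 ≤ x := by
  rw [gammaMeasure, ae_withDensity_iff (measurable_gammaPDF a r)]
  exact ae_of_all _ fun x hx => not_lt.1 fun hneg => hx (gammaPDF_of_neg hneg)

lemma gammaPDFReal_natCast {m : ℕ} (hm : m ≠ 0) {x : ℝ} (hx : 0 ≤ x) :
    gammaPDFReal m r x = r ^ m * x ^ (m - 1) * exp (-(r * x)) / Gamma m := by
  rw [gammaPDFReal, if_pos hx, rpow_natCast, ← Nat.cast_pred (Nat.pos_of_ne_zero hm),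
    rpow_natCast]
  ring

lemma gammaPDFReal_add_one (ha : 0 < a) (hr : 0 < r) {x : ℝ} (hx : 0 < x) :
    gammaPDFReal (a + 1) r x = r / a * x * gammaPDFReal a r x := by
  rw [gammaPDFReal, gammaPDFReal, if_pos hx.le, if_pos hx.le, Gamma_add_one ha.ne',
    rpow_add_one hr.ne', add_sub_cancel_right, rpow_sub_one hx.ne']
  field_simp

lemma integral_mul_gammaMeasure (ha : 0 < a) (hr : 0 < r) (f : ℝ → ℝ) :
    ∫ x, x * f x ∂gammaMeasure a r = a / r * ∫ x, f x ∂gammaMeasure (a + 1) r := by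
  rw [integral_gammaMeasure ha hr, integral_gammaMeasure (by positivity) hr,
    ← integral_const_mul]
  refine setIntegral_congr_fun measurableSet_Ioi fun x hx => ?_
  rw [gammaPDFReal_add_one ha hr hx]
  field_simp

lemma integral_inv_mul_gammaMeasure (ha : 0 < a) (hr : 0 < r) (f : ℝ → ℝ) :
    ∫ x, x⁻¹ * f x ∂gammaMeasure (a + 1) r = r / a * ∫ x, f x ∂gammaMeasure a r := by
  rw [integral_gammaMeasure ha hr, integral_gammaMeasure (by positivity) hr,
    ← integral_const_mul]
  refine setIntegral_congr_fun measurableSet_Ioi fun x (hx : 0 < x) => ?_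
  rw [gammaPDFReal_add_one ha hr hx]
  field_simp

lemma integral_id_gammaMeasure (ha : 0 < a) (hr : 0 < r) :
    ∫ x, x ∂gammaMeasure a r = a / r := by
  have := isProbabilityMeasure_gammaMeasure (a := a + 1) (by positivity) hr
  simpa using integral_mul_gammaMeasure ha hr fun _ => 1

lemma integral_sq_gammaMeasure (ha : 0 < a) (hr : 0 < r) :
    ∫ x, x ^ 2 ∂gammaMeasure a r = a * (a + 1) / r ^ 2 := by
  have h := integral_mul_gammaMeasure ha hr id
  simp only [id, ← sq, integral_id_gammaMeasure (a := a + 1) (by positivity) hr] at h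
  rw [h]
  field_simp

lemma integral_sub_sq_gammaMeasure (ha : 0 < a) (hr : 0 < r) (b : ℝ) :
    ∫ x, (x - b) ^ 2 ∂gammaMeasure a r = a / r ^ 2 + (a / r - b) ^ 2 := by
  have := isProbabilityMeasure_gammaMeasure ha hr
  have hx : Integrable (fun x => x) (gammaMeasure a r) :=
    .of_integral_ne_zero (by rw [integral_id_gammaMeasure ha hr]; positivity)
  have hx2 : Integrable (fun x => x ^ 2) (gammaMeasure a r) :=
    .of_integral_ne_zero (by rw [integral_sq_gammaMeasure ha hr]; positivity)
  have hbx : Integrable (fun x => 2 * x * b) (gammaMeasure a r) := (hx.const_mul 2).mul_const b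
  simp_rw [sub_sq]
  rw [integral_add (f := fun x => x ^ 2 - 2 * x * b) (hx2.sub hbx) (integrable_const _),
    integral_sub hx2 hbx, integral_mul_const, integral_const_mul, integral_id_gammaMeasure ha hr,
    integral_sq_gammaMeasure ha hr]
  simp
  ring

lemma integral_inv_sq_mul_gammaMeasure (ha : 0 < a) (hr : 0 < r) (f : ℝ → ℝ) :
    ∫ x, (x⁻¹) ^ 2 * f x ∂gammaMeasure (a + 2) r
      = r ^ 2 / (a * (a + 1)) * ∫ x, f x ∂gammaMeasure a r := by
  simp_rw [sq, mul_assoc]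
  rw [show a + 2 = a + 1 + 1 by ring, integral_inv_mul_gammaMeasure (by positivity) hr,
    integral_inv_mul_gammaMeasure ha hr]
  field_simp

end ProbabilityTheory

lemma tendsto_integral_exp_neg_div_gammaMeasure {r c : ℝ} (hr : 0 < r) (hc : 0 ≤ c) :
    Tendsto (fun k : ℕ => ∫ t, exp (-(c / (t / ((k : ℝ) + 3)))) ∂gammaMeasure ((k : ℝ) + 1) r)
      atTop (𝓝 (exp (-(c * r)))) := by
  have : ∀ k : ℕ, IsProbabilityMeasure (gammaMeasure ((k : ℝ) + 1) r) :=
    fun k => isProbabilityMeasure_gammaMeasure (by positivity) hr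
  have hdist_sq : ∀ k : ℕ, ∫ t, (t / ((k : ℝ) + 3) - 1 / r) ^ 2 ∂gammaMeasure ((k : ℝ) + 1) r
      = (((k : ℝ) + 3)⁻¹ + 2 * ((k : ℝ) + 3)⁻¹ ^ 2) / r ^ 2 := by
    intro k
    have hsq : ∀ t : ℝ, (t / ((k : ℝ) + 3) - 1 / r) ^ 2
        = (t - ((k : ℝ) + 3) / r) ^ 2 / ((k : ℝ) + 3) ^ 2 := fun t => by field_simp
    simp_rw [hsq]
    rw [integral_div, integral_sub_sq_gammaMeasure (by positivity) hr]
    field_simp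
    ring
  have hu : Tendsto (fun k : ℕ => ((k : ℝ) + 3)⁻¹) atTop (𝓝 0) :=
    tendsto_inv_atTop_zero.comp (tendsto_atTop_add_const_right _ _ tendsto_natCast_atTop_atTop)
  have hL2 : Tendsto (fun k : ℕ => ∫ t, (t / ((k : ℝ) + 3) - 1 / r) ^ 2
      ∂gammaMeasure ((k : ℝ) + 1) r) atTop (𝓝 0) := by
    simp only [hdist_sq]
    simpa using (hu.add ((hu.pow 2).const_mul 2)).div_const (r ^ 2)
  have hbound : ∀ k : ℕ, ∀ᵐ t ∂gammaMeasure ((k : ℝ) + 1) r,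
      |exp (-(c / (t / ((k : ℝ) + 3))))| ≤ 1 := fun k => by
    filter_upwards [ae_nonneg_gammaMeasure] with t ht
    rw [abs_of_pos (exp_pos _), exp_le_one_iff, neg_nonpos]
    positivity
  have hmeas : ∀ k : ℕ, Measurable fun t => exp (-(c / (t / ((k : ℝ) + 3)))) := by fun_prop
  simpa using tendsto_integral_comp_of_tendsto_integral_sub_sq
    (X := fun (k : ℕ) t => t / ((k : ℝ) + 3)) (ψ := fun y => exp (-(c / y)))
    (fun k => .of_integral_ne_zero (by rw [hdist_sq]; positivity)) hL2
    (fun k => (hmeas k).aestronglyMeasurable) hbound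
    (by fun_prop (disch := positivity) : ContinuousAt (fun y => exp (-(c / y))) (1 / r))

lemma pdf_mle_second_moment_eq {B : ℝ} (hB : 0 < B) (c : ℝ) (k : ℕ) :
    ∫ t in Ioi (0 : ℝ), (((k + 3 : ℕ) : ℝ) / t) ^ 2 * exp (-(2 * ((k + 3 : ℕ) : ℝ) * c / t)) *
        (B ^ (k + 3) * t ^ (k + 3 - 1) * exp (-(B * t)) / Gamma ((k + 3 : ℕ) : ℝ))
      = B ^ 2 * (((k : ℝ) + 3) ^ 2 / (((k : ℝ) + 1) * ((k : ℝ) + 2))) *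
        ∫ t, exp (-(2 * c / (t / ((k : ℝ) + 3)))) ∂gammaMeasure ((k : ℝ) + 1) B := by
  have hshape : ((k + 3 : ℕ) : ℝ) = (k : ℝ) + 1 + 2 := by push_cast; ring
  calc _ = ∫ t, (t⁻¹) ^ 2 * (((k : ℝ) + 3) ^ 2 * exp (-(2 * c / (t / ((k : ℝ) + 3)))))
        ∂gammaMeasure ((k + 3 : ℕ) : ℝ) B := by
        rw [integral_gammaMeasure (by positivity) hB]
        refine setIntegral_congr_fun measurableSet_Ioi fun t (ht : 0 < t) => ?_
        rw [gammaPDFReal_natCast (by omega) ht.le]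
        push_cast
        field_simp
    _ = _ := by
        rw [hshape, integral_inv_sq_mul_gammaMeasure (by positivity) hB, integral_const_mul]
        ring

/-- If `Tₘ ~ Gamma(shape m, rate B)` then the second moment of the density estimator,
`E[((m / Tₘ) exp(-m c / Tₘ))²]`, converges to `B² exp(-2 c B) = (B exp(-c B))²`. -/
theorem pdf_mle_second_moment_limit (B c : ℝ) (hB : 0 < B) (hc : 0 ≤ c) :
    Tendsto (fun m : ℕ =>
        ∫ t in Set.Ioi (0 : ℝ), ((m : ℝ) / t) ^ 2 * Real.exp (-(2 * (m : ℝ) * c / t)) *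
          (B ^ m * t ^ (m - 1) * Real.exp (-(B * t)) / Real.Gamma (m : ℝ)))
      atTop (nhds (B ^ 2 * Real.exp (-(2 * c * B)))) := by
  rw [← tendsto_add_atTop_iff_nat 3]
  have hprefactor : Tendsto (fun k : ℕ => ((k : ℝ) + 3) ^ 2 / (((k : ℝ) + 1) * ((k : ℝ) + 2)))
      atTop (𝓝 1) := by
    have h := (tendsto_add_mul_div_add_mul_atTop_nhds (3 : ℝ) 1 1 one_ne_zero).mul
      (tendsto_add_mul_div_add_mul_atTop_nhds (3 : ℝ) 2 1 one_ne_zero)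
    rw [div_one, one_mul] at h
    refine h.congr fun k => ?_
    field_simp
    ring
  have h := ((tendsto_const_nhds (x := B ^ 2)).mul hprefactor).mul
    (tendsto_integral_exp_neg_div_gammaMeasure hB (by positivity : 0 ≤ 2 * c))
  rw [mul_one] at h
  exact h.congr fun k => (pdf_mle_second_moment_eq hB c k).symm
end
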